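/- Fix integers k, K ≥ 1. Let w be a permutation of {1,...,K} in the subgroup generated by (k+1)-cycles that is 1 mod k, and let u be in this subgroup with u ≤_k w. Then u is 1 mod k, u⁻¹w ≤_k w, and u⁻¹w is 1 mod k. -/

import Mathlib

/-!
Let `c v` be the number of cycles of `v`, fixed points included. Multiplying by a transposition
merges two cycles or refines the cycle partition, so it lowers `c` by at most one; a
`(k+1)`-cycle is a product of `k` transpositions, hence `K ≤ c w + k ℓ_k(w)` for all `w`.
Equality holds exactly when `w` is `1 mod k`: cutting each cycle of length `qk+1` into `q`
overlapping `(k+1)`-cycles gives equality, and conversely a drop by exactly `k` forces the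
`(k+1)`-cycle to merge `k+1` distinct cycles into one, whose length is again `1 mod k`.
If `w` is `1 mod k` and `ℓ_k(u) + ℓ_k(u⁻¹w) = ℓ_k(w)`, then the bounds
`c u ≤ c w + k ℓ_k(u⁻¹w)` and `c (u⁻¹w) ≤ c w + k ℓ_k(u)` leave no room: `u` and `u⁻¹w`
reach equality too. Finally `(u⁻¹w)⁻¹w = w⁻¹uw` and `ℓ_k` is invariant under conjugation.
-/

/-- `t` is a `(k+1)`-cycle: a single cycle whose support has exactly `k+1` elements. -/
def IsKCycle (k : ℕ) {N : ℕ} (t : Equiv.Perm (Fin N)) : Prop :=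
  t.IsCycle ∧ t.support.card = k + 1

/-- `ellK k w` is the minimum number of `(k+1)`-cycles whose product is `w`
(`0` for the identity, via the empty list). -/
noncomputable def ellK (k : ℕ) {N : ℕ} (w : Equiv.Perm (Fin N)) : ℕ :=
  sInf {m | ∃ l : List (Equiv.Perm (Fin N)),
    l.length = m ∧ (∀ t ∈ l, IsKCycle k t) ∧ l.prod = w}

/-- the `k`-absolute order: `u ≤_k w` iff `ℓ_k(u) + ℓ_k(u⁻¹w) = ℓ_k(w)`. -/
def absLe (k : ℕ) {N : ℕ} (u w : Equiv.Perm (Fin N)) : Prop :=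
  ellK k u + ellK k (u⁻¹ * w) = ellK k w

/-- the subgroup of the symmetric group generated by all `(k+1)`-cycles. -/
def kGenSubgroup (k N : ℕ) : Subgroup (Equiv.Perm (Fin N)) :=
  Subgroup.closure {t | IsKCycle k t}

/-- a permutation is `1 mod k` if all its cycle lengths are congruent to `1` mod `k`
(fixed points, of length `1`, satisfy this automatically). -/
def IsOneModK (k : ℕ) {N : ℕ} (w : Equiv.Perm (Fin N)) : Prop :=
  ∀ l ∈ w.cycleType, l % k = 1 % k

/-- the number of cycles of `w`, counting fixed points as cycles of length 1. -/
def cyc {N : ℕ} (w : Equiv.Perm (Fin N)) : ℕ :=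
  w.cycleType.card + (N - w.support.card)

/-- extend a tuple `(u_1, ..., u_q)` by `u_0 = 1` and `u_i = c` for `i > q`. -/
def chainExt {G : Type*} [One G] (q : ℕ) (c : G) (u : Fin q → G) (i : ℕ) : G :=
  if _h0 : i = 0 then 1 else if h : i ≤ q then u ⟨i - 1, by omega⟩ else c

/-- `(u_1, ..., u_q)` is a `q`-multichain: `u_1 ≤_k u_2 ≤_k ⋯ ≤_k u_q ≤_k c`. -/
def IsMultichainTo (k : ℕ) {N : ℕ} (q : ℕ) (c : Equiv.Perm (Fin N))
    (u : Fin q → Equiv.Perm (Fin N)) : Prop :=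
  ∀ i : ℕ, 1 ≤ i → i ≤ q → absLe k (chainExt q c u i) (chainExt q c u (i + 1))

open Equiv Equiv.Perm Finset

namespace Equiv.Perm

variable {α : Type*} {v τ : Perm α} {a b x y : α}

section Finite

variable [Finite α]

theorem SameCycle.mem_of_mapsTo {s : Set α}
    (hs : Set.MapsTo v s s) (hx : x ∈ s) (h : v.SameCycle x y) : y ∈ s := by
  obtain ⟨n, rfl⟩ := h.exists_nat_pow_eq
  rw [coe_pow]
  exact hs.iterate n hx

theorem SameCycle.of_mul
    (hτ : ∀ z, v.SameCycle x z → v.SameCycle x (τ z)) (h : (v * τ).SameCycle x y) :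
    v.SameCycle x y :=
  h.mem_of_mapsTo (s := {z | v.SameCycle x z})
    (fun z hz => show v.SameCycle x (v (τ z)) from sameCycle_apply_right.2 (hτ z hz)) .rfl

theorem sameCycle_mul_iff_of_forall_fixed (hτ : ∀ z, v.SameCycle x z → τ z = z) :
    (v * τ).SameCycle x y ↔ v.SameCycle x y := by
  have forward : ∀ {y}, (v * τ).SameCycle x y → v.SameCycle x y :=
    SameCycle.of_mul fun z hz => by rwa [hτ z hz]
  refine ⟨forward, fun h => ?_⟩
  have hτ' : ∀ z, (v * τ).SameCycle x z → τ⁻¹ z = z := fun z hz =>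
    inv_eq_iff_eq.2 (hτ z (forward hz)).symm
  have h' : (v * τ * τ⁻¹).SameCycle x y := by rwa [mul_inv_cancel_right]
  exact h'.of_mul fun z hz => by rwa [hτ' z hz]

variable [DecidableEq α]

theorem SameCycle.of_mul_swap (h : (v * swap a b).SameCycle x y) :
    v.SameCycle x y ∨ v.SameCycle a y ∨ v.SameCycle b y := by
  refine h.mem_of_mapsTo (s := {z | v.SameCycle x z ∨ v.SameCycle a z ∨ v.SameCycle b z})
    (fun z hz => ?_) (Or.inl .rfl)
  simp only [Set.mem_ofPred_eq, Perm.mul_apply, sameCycle_apply_right] at hz ⊢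
  rcases eq_or_ne z a with rfl | hza
  · simp [SameCycle.refl]
  rcases eq_or_ne z b with rfl | hzb
  · simp [SameCycle.refl]
  rwa [swap_apply_of_ne_of_ne hza hzb]

theorem sameCycle_mul_swap_of_not_sameCycle (hab : ¬v.SameCycle a b) (hy : v.SameCycle b y) :
    (v * swap a b).SameCycle a y := by
  set σ := v * swap a b
  have hσa : σ a = v b := by simp [σ]
  -- Follow the cycle of `b` from `v b = σ a`: `σ` agrees with `v` until `b` is reached.
  have key : ¬v.SameCycle a y → σ.SameCycle a y := by
    refine (sameCycle_apply_left.2 hy).mem_of_mapsTo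
      (s := {z | ¬v.SameCycle a z → σ.SameCycle a z}) (fun z hz hvz => ?_)
      (fun _ => hσa ▸ sameCycle_apply_right.2 .rfl)
    have hz' : ¬v.SameCycle a z := fun h => hvz (sameCycle_apply_right.2 h)
    have hza : z ≠ a := fun h => hz' (h ▸ .rfl)
    rcases eq_or_ne z b with rfl | hzb
    · rw [← hσa]; exact sameCycle_apply_right.2 .rfl
    · have : σ z = v z := by simp [σ, swap_apply_of_ne_of_ne hza hzb]
      rw [← this]; exact sameCycle_apply_right.2 (hz hz')
  exact key fun h => hab (h.trans hy.symm)

theorem sameCycle_mul_swap_iff (hab : ¬v.SameCycle a b) :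
    (v * swap a b).SameCycle a y ↔ v.SameCycle a y ∨ v.SameCycle b y := by
  refine ⟨fun h => by simpa [or_self_left] using h.of_mul_swap, ?_⟩
  rintro (hy | hy)
  · have hba : ¬v.SameCycle b a := fun h => hab h.symm
    have h₁ := sameCycle_mul_swap_of_not_sameCycle hba hy
    rw [swap_comm] at h₁
    exact (sameCycle_mul_swap_of_not_sameCycle hab .rfl).trans h₁
  · exact sameCycle_mul_swap_of_not_sameCycle hab hy

theorem SameCycle.mul_swap (hab : ¬v.SameCycle a b) (h : v.SameCycle x y) :
    (v * swap a b).SameCycle x y := by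
  by_cases hx : v.SameCycle a x ∨ v.SameCycle b x
  · have hy : v.SameCycle a y ∨ v.SameCycle b y := hx.imp (·.trans h) (·.trans h)
    exact ((sameCycle_mul_swap_iff hab).2 hx).symm.trans ((sameCycle_mul_swap_iff hab).2 hy)
  · rw [not_or] at hx
    refine (sameCycle_mul_iff_of_forall_fixed fun z hz => ?_).2 h
    exact swap_apply_of_ne_of_ne (fun h => hx.1 (h ▸ hz.symm)) (fun h => hx.2 (h ▸ hz.symm))

end Finite

variable [Fintype α] [DecidableEq α]

def cycleOrbit (v : Perm α) (x : α) : Finset α := {y | v.SameCycle x y}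

theorem mem_cycleOrbit : y ∈ cycleOrbit v x ↔ v.SameCycle x y := by simp [cycleOrbit]

theorem SameCycle.cycleOrbit_eq (h : v.SameCycle x y) : cycleOrbit v x = cycleOrbit v y := by
  ext z
  simp only [mem_cycleOrbit]
  exact ⟨h.symm.trans, h.trans⟩

theorem card_cycleOrbit_pos : 0 < #(cycleOrbit v x) := card_pos.2 ⟨x, mem_cycleOrbit.2 .rfl⟩

theorem sum_inv_card_cycleOrbit (v : Perm α) (x : α) :
    ∑ y ∈ cycleOrbit v x, (#(cycleOrbit v y) : ℚ)⁻¹ = 1 := by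
  rw [sum_congr rfl fun y hy => by rw [← (mem_cycleOrbit.1 hy).cycleOrbit_eq], sum_const,
    nsmul_eq_mul, mul_inv_cancel₀ (by exact_mod_cast card_cycleOrbit_pos.ne')]

theorem cycleOrbit_eq_singleton (hx : v x = x) : cycleOrbit v x = {x} := by
  ext y
  rw [mem_cycleOrbit, mem_singleton]
  exact ⟨fun h => (h.eq_of_left hx).symm, fun h => h ▸ .rfl⟩

theorem cycleOrbit_eq_support_cycleOf (hx : x ∈ v.support) :
    cycleOrbit v x = (v.cycleOf x).support := by
  ext y
  rw [mem_cycleOrbit, mem_support_cycleOf_iff, and_iff_left hx]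

theorem cycleOrbit_mul_of_forall_fixed (hτ : ∀ z, v.SameCycle x z → τ z = z) :
    cycleOrbit (v * τ) x = cycleOrbit v x := by
  ext y
  simp only [mem_cycleOrbit, sameCycle_mul_iff_of_forall_fixed hτ]

/-- The number of cycles of `v`, fixed points included, as a sum over points: this makes the
effect of multiplying by a transposition easy to compute. -/
def numCycles (v : Perm α) : ℚ := ∑ x, (#(cycleOrbit v x) : ℚ)⁻¹

theorem numCycles_le_of_forall_sameCycle_imp (h : ∀ x y, τ.SameCycle x y → v.SameCycle x y) :
    numCycles v ≤ numCycles τ :=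
  sum_le_sum fun x _ => inv_anti₀ (by exact_mod_cast card_cycleOrbit_pos) <| by
    exact_mod_cast card_le_card fun y hy => mem_cycleOrbit.2 (h x y (mem_cycleOrbit.1 hy))

theorem numCycles_le_mul_swap_of_sameCycle (hab : v.SameCycle a b) :
    numCycles v ≤ numCycles (v * swap a b) := by
  refine numCycles_le_of_forall_sameCycle_imp fun x y => SameCycle.of_mul fun z hz => ?_
  rcases eq_or_ne z a with rfl | hza
  · rw [swap_apply_left]; exact hz.trans hab
  rcases eq_or_ne z b with rfl | hzb
  · rw [swap_apply_right]; exact hz.trans hab.symm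
  · rwa [swap_apply_of_ne_of_ne hza hzb]

theorem numCycles_mul_swap_of_not_sameCycle (hab : ¬v.SameCycle a b) :
    numCycles (v * swap a b) = numCycles v - 1 := by
  set U := cycleOrbit (v * swap a b) a
  have hU : U = cycleOrbit v a ∪ cycleOrbit v b := by
    ext y
    simp only [U, mem_union, mem_cycleOrbit, sameCycle_mul_swap_iff hab]
  have hdisj : _root_.Disjoint (cycleOrbit v a) (cycleOrbit v b) := disjoint_left.2 fun z ha hb =>
    hab ((mem_cycleOrbit.1 ha).trans (mem_cycleOrbit.1 hb).symm)
  have hout : ∀ x ∈ Uᶜ, cycleOrbit (v * swap a b) x = cycleOrbit v x := fun x hx => by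
    simp only [hU, mem_compl, mem_union, mem_cycleOrbit, not_or] at hx
    exact cycleOrbit_mul_of_forall_fixed fun z hz =>
      swap_apply_of_ne_of_ne (fun h => hx.1 (h ▸ hz.symm)) (fun h => hx.2 (h ▸ hz.symm))
  have hinside : ∑ x ∈ U, (#(cycleOrbit v x) : ℚ)⁻¹ = 2 := by
    rw [hU, sum_union hdisj, sum_inv_card_cycleOrbit, sum_inv_card_cycleOrbit]
    norm_num
  rw [numCycles, numCycles, ← sum_add_sum_compl U, ← sum_add_sum_compl U, hinside,
    sum_inv_card_cycleOrbit, sum_congr rfl fun x hx => by rw [hout x hx]]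
  ring

theorem numCycles_sub_one_le_mul_swap (v : Perm α) (a b : α) :
    numCycles v - 1 ≤ numCycles (v * swap a b) := by
  by_cases hab : v.SameCycle a b
  · linarith [numCycles_le_mul_swap_of_sameCycle hab]
  · exact (numCycles_mul_swap_of_not_sameCycle hab).ge

theorem numCycles_sub_length_le_mul_formPerm (v : Perm α) (a : α) (l : List α) :
    numCycles v - l.length ≤ numCycles (v * (a :: l).formPerm) := by
  induction l generalizing v a with
  | nil => simp
  | cons b l ih =>
    rw [List.formPerm_cons_cons, ← mul_assoc, List.length_cons, Nat.cast_succ]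
    linarith [ih (v * swap a b) b, numCycles_sub_one_le_mul_swap v a b]

/-- The cycle count drops by `l.length` only if the points of `a :: l` lie in distinct cycles
of `v`, which `(a :: l).formPerm` then merges into a single one. -/
theorem pairwise_and_sameCycle_of_numCycles_mul_formPerm (a : α) (l : List α) (v : Perm α)
    (h : numCycles (v * (a :: l).formPerm) = numCycles v - l.length) :
    (a :: l).Pairwise (fun x y => ¬v.SameCycle x y) ∧
      ∀ x, (v * (a :: l).formPerm).SameCycle a x ↔ ∃ y ∈ a :: l, v.SameCycle y x := by
  induction l generalizing v a with
  | nil => simp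
  | cons b l ih =>
    set σ₁ := v * swap a b
    rw [List.formPerm_cons_cons, ← mul_assoc] at h ⊢
    rw [List.length_cons, Nat.cast_succ] at h
    have hrest := numCycles_sub_length_le_mul_formPerm σ₁ b l
    have hab : ¬v.SameCycle a b := fun hab => by
      linarith [numCycles_le_mul_swap_of_sameCycle hab]
    obtain ⟨hpair, horb⟩ := ih b σ₁ (by linarith [numCycles_sub_one_le_mul_swap v a b])
    have hmerge := fun {y} => sameCycle_mul_swap_iff (y := y) hab
    have hσ₁ba : σ₁.SameCycle b a := (hmerge.2 (Or.inr .rfl)).symm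
    have hba : (σ₁ * (b :: l).formPerm).SameCycle b a :=
      (horb a).2 ⟨b, List.mem_cons_self, hσ₁ba⟩
    refine ⟨hpair.imp (fun h hv => h (hv.mul_swap hab)) |>.cons fun y hy hay => ?_, fun x => ?_⟩
    · rcases List.mem_cons.1 hy with rfl | hy
      · exact hab hay
      · exact List.rel_of_pairwise_cons hpair hy (hσ₁ba.trans (hmerge.2 (Or.inl hay)))
    rw [show _ ↔ _ from ⟨hba.trans, hba.symm.trans⟩, horb x]
    constructor
    · rintro ⟨y, hy, hyx⟩
      rcases hyx.of_mul_swap with h | h | h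
      · exact ⟨y, List.mem_cons_of_mem _ hy, h⟩
      · exact ⟨a, List.mem_cons_self, h⟩
      · exact ⟨b, by simp, h⟩
    · rintro ⟨y, hy, hyx⟩
      rcases List.mem_cons.1 hy with rfl | hy
      · exact ⟨b, List.mem_cons_self, hσ₁ba.trans (hmerge.2 (Or.inl hyx))⟩
      · exact ⟨y, hy, hyx.mul_swap hab⟩

def OrbitsOneMod (n : ℕ) (v : Perm α) : Prop := ∀ x, (#(cycleOrbit v x) : ZMod n) = 1

theorem OrbitsOneMod.mul_formPerm {n : ℕ} {a : α} {l : List α} (hv : OrbitsOneMod n v)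
    (hl : l.length = n) (h : numCycles (v * (a :: l).formPerm) = numCycles v - n) :
    OrbitsOneMod n (v * (a :: l).formPerm) := by
  subst hl
  obtain ⟨hpair, horb⟩ := pairwise_and_sameCycle_of_numCycles_mul_formPerm a l v h
  intro x
  by_cases hx : ∃ y ∈ a :: l, v.SameCycle y x
  · have hmerged : cycleOrbit (v * (a :: l).formPerm) x =
        (a :: l).toFinset.biUnion (cycleOrbit v) := by
      rw [← ((horb x).2 hx).cycleOrbit_eq]
      ext z
      simp [mem_cycleOrbit, horb]
    have : Std.Symm (fun x y => ¬v.SameCycle x y) := ⟨fun _ _ h h' => h h'.symm⟩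
    have hdisj : ((a :: l).toFinset : Set α).PairwiseDisjoint (cycleOrbit v) :=
      fun y hy z hz hyz => disjoint_left.2 fun w hwy hwz =>
        hpair.forall (by simpa using hy) (by simpa using hz) hyz
          ((mem_cycleOrbit.1 hwy).trans (mem_cycleOrbit.1 hwz).symm)
    have hnodup : (a :: l).Nodup := hpair.imp fun h e => h (by subst e; exact .rfl)
    rw [hmerged, card_biUnion hdisj, Nat.cast_sum, sum_congr rfl fun y _ => hv y, sum_const,
      List.toFinset_card_of_nodup hnodup, nsmul_one, List.length_cons, Nat.cast_succ,
      ZMod.natCast_self, zero_add]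
  · simp only [not_exists, not_and] at hx
    rw [cycleOrbit_mul_of_forall_fixed fun z hz =>
      List.formPerm_apply_of_notMem fun hm => hx z hm hz.symm]
    exact hv x

theorem mem_cycleType_iff_exists_card_cycleOrbit {m : ℕ} :
    m ∈ v.cycleType ↔ ∃ x ∈ v.support, #(cycleOrbit v x) = m := by
  rw [cycleType_def, Multiset.mem_map]
  constructor
  · rintro ⟨c, hc, rfl⟩
    obtain ⟨x, hx⟩ := (mem_cycleFactorsFinset_iff.1 hc).1.nonempty_support
    have hxv := mem_cycleFactorsFinset_support_le hc hx
    exact ⟨x, hxv, by rw [cycleOrbit_eq_support_cycleOf hxv, ← cycle_is_cycleOf hx hc]; rfl⟩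
  · rintro ⟨x, hx, rfl⟩
    exact ⟨v.cycleOf x, cycleOf_mem_cycleFactorsFinset_iff.2 hx,
      by rw [cycleOrbit_eq_support_cycleOf hx]; rfl⟩

theorem orbitsOneMod_iff {n : ℕ} :
    OrbitsOneMod n v ↔ ∀ m ∈ v.cycleType, (m : ZMod n) = 1 := by
  simp only [mem_cycleType_iff_exists_card_cycleOrbit]
  constructor
  · rintro h m ⟨x, -, rfl⟩
    exact h x
  · intro h x
    by_cases hx : x ∈ v.support
    · exact h _ ⟨x, hx, rfl⟩
    · rw [cycleOrbit_eq_singleton (notMem_support.1 hx), card_singleton, Nat.cast_one]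

theorem numCycles_eq_card_cycleType_add (v : Perm α) :
    numCycles v = Multiset.card v.cycleType + (Fintype.card α - #v.support : ℕ) := by
  have hfixed :
      ∑ x ∈ v.supportᶜ, (#(cycleOrbit v x) : ℚ)⁻¹ = (Fintype.card α - #v.support : ℕ) := by
    rw [sum_congr rfl fun x hx => by
      rw [cycleOrbit_eq_singleton (notMem_support.1 (mem_compl.1 hx)), card_singleton,
        Nat.cast_one, inv_one], sum_const, card_compl, nsmul_one]
  have hmoved :
      ∑ x ∈ v.support, (#(cycleOrbit v x) : ℚ)⁻¹ = Multiset.card v.cycleType := by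
    rw [← sum_fiberwise_of_maps_to (g := v.cycleOf) (t := v.cycleFactorsFinset)
      fun x hx => cycleOf_mem_cycleFactorsFinset_iff.2 hx, cycleType_def, Multiset.card_map,
      card_val, card_eq_sum_ones, Nat.cast_sum]
    refine sum_congr rfl fun c hc => ?_
    obtain ⟨x, hx⟩ := (mem_cycleFactorsFinset_iff.1 hc).1.nonempty_support
    have hxv : x ∈ v.support := mem_cycleFactorsFinset_support_le hc hx
    have hfiber : {y ∈ v.support | v.cycleOf y = c} = cycleOrbit v x := by
      ext y
      rw [mem_filter, mem_cycleOrbit, cycle_is_cycleOf hx hc]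
      constructor
      · rintro ⟨hy, hyx⟩
        exact (sameCycle_iff_cycleOf_eq_of_mem_support hxv hy).2 hyx.symm
      · intro h
        exact ⟨mem_cycleFactorsFinset_support_le hc (cycle_is_cycleOf hx hc ▸
          mem_support_cycleOf_iff.2 ⟨h, hxv⟩), h.cycleOf_eq.symm⟩
    rw [hfiber, sum_inv_card_cycleOrbit, Nat.cast_one]
  rw [numCycles, ← sum_add_sum_compl v.support, hmoved, hfixed]

end Equiv.Perm

theorem List.formPerm_append_cons {α : Type*} [DecidableEq α] (l₁ l₂ : List α) (a : α) :
    (l₁ ++ a :: l₂).formPerm = (l₁ ++ [a]).formPerm * (a :: l₂).formPerm := by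
  induction l₁ with
  | nil => simp
  | cons x l₁ ih =>
    cases l₁ with
    | nil => simp [List.formPerm_cons_cons]
    | cons y l₁ =>
      simp only [List.cons_append, List.formPerm_cons_cons] at ih ⊢
      rw [ih, mul_assoc]

theorem Equiv.Perm.IsCycle.exists_nodup_formPerm_eq {α : Type*} [Fintype α] [DecidableEq α]
    {c : Perm α} (hc : c.IsCycle) :
    ∃ l : List α, l.Nodup ∧ l.length = #c.support ∧ l.formPerm = c := by
  obtain ⟨x, hx⟩ := hc.nonempty_support
  have hcx := hc.cycleOf_eq (mem_support.1 hx)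
  exact ⟨c.toList x, nodup_toList c x, by rw [length_toList, hcx], by rw [formPerm_toList, hcx]⟩

section KCycles

variable {k N : ℕ} {t w : Perm (Fin N)}

theorem IsKCycle.inv (ht : IsKCycle k t) : IsKCycle k t⁻¹ :=
  ⟨ht.1.inv, by rw [support_inv]; exact ht.2⟩

theorem IsKCycle.conj (ht : IsKCycle k t) (g : Perm (Fin N)) : IsKCycle k (g * t * g⁻¹) :=
  ⟨ht.1.conj, by rw [support_conj, card_map]; exact ht.2⟩

theorem IsKCycle.exists_formPerm_cons_eq (ht : IsKCycle k t) :
    ∃ (a : Fin N) (l : List (Fin N)), l.length = k ∧ (a :: l).formPerm = t := by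
  obtain ⟨_ | ⟨a, l⟩, -, hlen, hform⟩ := ht.1.exists_nodup_formPerm_eq
  · simp [ht.2] at hlen
  · exact ⟨a, l, by simpa [ht.2] using hlen, hform⟩

theorem isKCycle_formPerm (hk : 0 < k) {l : List (Fin N)} (hl : l.Nodup) (hlen : l.length = k + 1) :
    IsKCycle k l.formPerm := by
  refine ⟨List.isCycle_formPerm hl (by omega), ?_⟩
  rw [List.support_formPerm_of_nodup l hl fun x h => by simp [h] at hlen; omega,
    List.toFinset_card_of_nodup hl, hlen]

theorem exists_isKCycle_prod_eq_formPerm (hk : 0 < k) (q : ℕ) {l : List (Fin N)} (hl : l.Nodup)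
    (hlen : l.length = k * q + 1) :
    ∃ L : List (Perm (Fin N)), (∀ t ∈ L, IsKCycle k t) ∧ L.prod = l.formPerm ∧
      L.length = q := by
  induction q generalizing l with
  | zero =>
    obtain ⟨x, rfl⟩ := List.length_eq_one_iff.1 hlen
    exact ⟨[], by simp, by simp, rfl⟩
  | succ q ih =>
    have hk' : k < l.length := by rw [hlen, Nat.mul_succ]; omega
    obtain ⟨l₁, a, l₂, rfl, hl₁⟩ : ∃ l₁ a l₂, l = l₁ ++ a :: l₂ ∧ l₁.length = k :=
      ⟨l.take k, l[k], l.drop (k + 1), by rw [← List.drop_eq_getElem_cons, List.take_append_drop],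
        List.length_take_of_le hk'.le⟩
    rw [List.length_append, List.length_cons, hl₁, Nat.mul_succ] at hlen
    obtain ⟨L, hL, hprod, hlenL⟩ :=
      ih (hl.sublist (List.sublist_append_right l₁ _)) (by rw [List.length_cons]; omega)
    refine ⟨(l₁ ++ [a]).formPerm :: L, ?_, ?_, by rw [List.length_cons, hlenL]⟩
    · intro s hs
      rcases List.mem_cons.1 hs with rfl | hs
      · exact isKCycle_formPerm hk
          (hl.sublist ((List.singleton_sublist.2 List.mem_cons_self).append_left l₁))
          (by simp [hl₁])
      · exact hL s hs
    · rw [List.prod_cons, hprod, List.formPerm_append_cons l₁ l₂ a]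

theorem IsOneModK.exists_isKCycle_prod_eq (hk : 0 < k) (hw : IsOneModK k w) :
    ∃ L : List (Perm (Fin N)), (∀ t ∈ L, IsKCycle k t) ∧ L.prod = w ∧
      k * L.length + Multiset.card w.cycleType = #w.support := by
  induction w using cycle_induction_on with
  | base_one => exact ⟨[], by simp, by simp, by simp⟩
  | base_cycles c hc =>
    have hmod : #c.support % k = 1 % k := hw _ (by simp [hc.cycleType])
    have htwo := hc.two_le_card_support
    obtain ⟨q, hq⟩ : k ∣ #c.support - 1 := (Nat.modEq_iff_dvd' (by omega)).1 hmod.symm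
    obtain ⟨l, hl, hlen, hform⟩ := hc.exists_nodup_formPerm_eq
    obtain ⟨L, hL, hprod, hlenL⟩ := exists_isKCycle_prod_eq_formPerm hk q hl (by omega)
    refine ⟨L, hL, hprod.trans hform, ?_⟩
    rw [hc.cycleType, Multiset.card_singleton, hlenL]
    omega
  | induction_disjoint σ τ hd _ ihσ ihτ =>
    rw [IsOneModK, hd.cycleType_mul] at hw
    obtain ⟨L₁, hL₁, rfl, h₁⟩ := ihσ fun m hm => hw m (Multiset.mem_add.2 (Or.inl hm))
    obtain ⟨L₂, hL₂, rfl, h₂⟩ := ihτ fun m hm => hw m (Multiset.mem_add.2 (Or.inr hm))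
    refine ⟨L₁ ++ L₂, fun t ht => (List.mem_append.1 ht).elim (hL₁ t) (hL₂ t),
      List.prod_append, ?_⟩
    rw [hd.cycleType_mul, hd.card_support_mul, Multiset.card_add, List.length_append, mul_add]
    omega

theorem exists_isKCycle_prod_eq_of_mem_kGenSubgroup (hw : w ∈ kGenSubgroup k N) :
    ∃ L : List (Perm (Fin N)), (∀ t ∈ L, IsKCycle k t) ∧ L.prod = w := by
  rw [kGenSubgroup, ← Subgroup.mem_toSubmonoid, Subgroup.closure_toSubmonoid] at hw
  obtain ⟨L, hL, rfl⟩ := Submonoid.exists_list_of_mem_closure hw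
  refine ⟨L, fun t ht => (hL t ht).elim id fun h => ?_, rfl⟩
  simpa using (Set.mem_inv.1 h : IsKCycle k t⁻¹).inv

theorem ellK_le_length {L : List (Perm (Fin N))} (hL : ∀ t ∈ L, IsKCycle k t) :
    ellK k L.prod ≤ L.length :=
  Nat.sInf_le ⟨L, rfl, hL, rfl⟩

theorem exists_length_eq_ellK (hw : w ∈ kGenSubgroup k N) :
    ∃ L : List (Perm (Fin N)),
      L.length = ellK k w ∧ (∀ t ∈ L, IsKCycle k t) ∧ L.prod = w := by
  obtain ⟨L, hL, hprod⟩ := exists_isKCycle_prod_eq_of_mem_kGenSubgroup hw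
  exact Nat.sInf_mem (s := {m | ∃ L : List (Perm (Fin N)),
    L.length = m ∧ (∀ t ∈ L, IsKCycle k t) ∧ L.prod = w}) ⟨L.length, L, rfl, hL, hprod⟩

theorem ellK_conj (g w : Perm (Fin N)) : ellK k (g * w * g⁻¹) = ellK k w := by
  have key : ∀ (g w : Perm (Fin N)) (m : ℕ),
      (∃ L : List (Perm (Fin N)), L.length = m ∧ (∀ t ∈ L, IsKCycle k t) ∧ L.prod = w) →
      ∃ L : List (Perm (Fin N)),
        L.length = m ∧ (∀ t ∈ L, IsKCycle k t) ∧ L.prod = g * w * g⁻¹ := by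
    rintro g w m ⟨L, rfl, hL, rfl⟩
    refine ⟨L.map (MulAut.conj g), List.length_map _, ?_, by rw [← map_list_prod]; rfl⟩
    simpa using fun t ht => (hL t ht).conj g
  unfold ellK
  congr 1
  ext m
  exact ⟨fun h => by simpa [mul_assoc] using key g⁻¹ _ m h, key g w m⟩

theorem numCycles_eq_cyc (w : Perm (Fin N)) : numCycles w = cyc w := by
  rw [numCycles_eq_card_cycleType_add, Fintype.card_fin, cyc, Nat.cast_add]

theorem cyc_one : cyc (1 : Perm (Fin N)) = N := by simp [cyc]

theorem numCycles_sub_le_mul_of_isKCycle (ht : IsKCycle k t) (v : Perm (Fin N)) :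
    numCycles v - k ≤ numCycles (v * t) := by
  obtain ⟨a, l, hlen, rfl⟩ := ht.exists_formPerm_cons_eq
  exact hlen ▸ numCycles_sub_length_le_mul_formPerm v a l

theorem numCycles_sub_le_mul_prod {L : List (Perm (Fin N))} (hL : ∀ t ∈ L, IsKCycle k t)
    (v : Perm (Fin N)) : numCycles v - k * L.length ≤ numCycles (v * L.prod) := by
  induction L generalizing v with
  | nil => simp
  | cons t L ih =>
    rw [List.prod_cons, ← mul_assoc, List.length_cons, Nat.cast_succ]
    linarith [numCycles_sub_le_mul_of_isKCycle (hL t List.mem_cons_self) v,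
      ih (fun s hs => hL s (List.mem_cons_of_mem t hs)) (v * t)]

theorem cyc_le_cyc_mul_add (v : Perm (Fin N)) (hw : w ∈ kGenSubgroup k N) :
    cyc v ≤ cyc (v * w) + k * ellK k w := by
  obtain ⟨L, hlen, hL, rfl⟩ := exists_length_eq_ellK hw
  have := numCycles_sub_le_mul_prod hL v
  rw [numCycles_eq_cyc, numCycles_eq_cyc, hlen] at this
  exact_mod_cast (by linarith : (cyc v : ℚ) ≤ cyc (v * L.prod) + k * ellK k L.prod)

theorem le_cyc_add_ellK (hw : w ∈ kGenSubgroup k N) : N ≤ cyc w + k * ellK k w := by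
  simpa [cyc_one] using cyc_le_cyc_mul_add 1 hw

theorem orbitsOneMod_prod_of_numCycles_eq {L : List (Perm (Fin N))} (hL : ∀ t ∈ L, IsKCycle k t)
    (h : numCycles L.prod = N - k * L.length) : OrbitsOneMod k L.prod := by
  induction L using List.reverseRecOn with
  | nil =>
    intro x
    rw [List.prod_nil, cycleOrbit_eq_singleton rfl, card_singleton, Nat.cast_one]
  | append_singleton L t ih =>
    have hL' : ∀ s ∈ L, IsKCycle k s := fun s hs => hL s (by simp [hs])
    have ht : IsKCycle k t := hL t (by simp)
    rw [List.prod_append, List.prod_singleton] at h ⊢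
    rw [List.length_append, List.length_singleton, Nat.cast_add, Nat.cast_one] at h
    have h₁ := numCycles_sub_le_mul_prod hL' 1
    have h₂ := numCycles_sub_le_mul_of_isKCycle ht L.prod
    rw [one_mul, numCycles_eq_cyc 1, cyc_one] at h₁
    obtain ⟨a, l, hlen, rfl⟩ := ht.exists_formPerm_cons_eq
    exact (ih hL' (by linarith)).mul_formPerm hlen (by linarith)

theorem isOneModK_iff_cyc_add_ellK_eq (hk : 0 < k) (hw : w ∈ kGenSubgroup k N) :
    IsOneModK k w ↔ cyc w + k * ellK k w = N := by
  constructor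
  · intro h
    obtain ⟨L, hL, rfl, hcount⟩ := h.exists_isKCycle_prod_eq hk
    have hsupp : #L.prod.support ≤ N := by simpa using card_le_univ L.prod.support
    have := Nat.mul_le_mul_left k (ellK_le_length hL)
    have := le_cyc_add_ellK hw
    unfold cyc at *
    omega
  · intro h
    obtain ⟨L, hlen, hL, rfl⟩ := exists_length_eq_ellK hw
    have hcount : numCycles L.prod = N - k * L.length := by
      rw [numCycles_eq_cyc, hlen]
      linarith [(by exact_mod_cast h : (cyc L.prod : ℚ) + k * ellK k L.prod = N)]
    intro m hm
    have := orbitsOneMod_iff.1 (orbitsOneMod_prod_of_numCycles_eq hL hcount) m hm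
    exact (ZMod.natCast_eq_natCast_iff' m 1 k).1 (by simpa using this)

end KCycles

theorem lower_ideal_general (k K : ℕ) (hk : 1 ≤ k)
    (w u : Equiv.Perm (Fin K)) (hw : w ∈ kGenSubgroup k K) (hu : u ∈ kGenSubgroup k K)
    (hw1 : IsOneModK k w) (hle : absLe k u w) :
    IsOneModK k u ∧ absLe k (u⁻¹ * w) w ∧ IsOneModK k (u⁻¹ * w) := by
  have hv : u⁻¹ * w ∈ kGenSubgroup k K := mul_mem (inv_mem hu) hw
  have hwuw : w⁻¹ * u * w ∈ kGenSubgroup k K := mul_mem (mul_mem (inv_mem hw) hu) hw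
  have hconj : ellK k (w⁻¹ * u * w) = ellK k u := by simpa using ellK_conj w⁻¹ u (k := k)
  have hw_eq := (isOneModK_iff_cyc_add_ellK_eq hk hw).1 hw1
  have hu_ge := le_cyc_add_ellK hu
  have hv_ge := le_cyc_add_ellK hv
  have hu_le : cyc u ≤ cyc w + k * ellK k (u⁻¹ * w) := by
    simpa using cyc_le_cyc_mul_add u hv
  have hv_le : cyc (u⁻¹ * w) ≤ cyc w + k * ellK k u := by
    have := cyc_le_cyc_mul_add (u⁻¹ * w) hwuw
    rwa [hconj, show u⁻¹ * w * (w⁻¹ * u * w) = w by group] at this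
  have hsum : k * ellK k u + k * ellK k (u⁻¹ * w) = k * ellK k w := by
    rw [← mul_add]; exact congrArg _ hle
  refine ⟨(isOneModK_iff_cyc_add_ellK_eq hk hu).2 (by omega), ?_,
    (isOneModK_iff_cyc_add_ellK_eq hk hv).2 (by omega)⟩
  show ellK k (u⁻¹ * w) + ellK k ((u⁻¹ * w)⁻¹ * w) = ellK k w
  rw [show (u⁻¹ * w)⁻¹ * w = w⁻¹ * u * w by group, hconj]
  exact (add_comm _ _).trans hle

/-- Corollary 2.4: if `w` is `1 mod k` and `u ≤_k w`, then `u` is `1 mod k`,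
`u⁻¹w ≤_k w`, and `u⁻¹w` is `1 mod k`. -/
theorem lower_ideal (k K : ℕ) (hk : 1 ≤ k) (hK : 1 ≤ K)
    (w u : Equiv.Perm (Fin K)) (hw : w ∈ kGenSubgroup k K) (hu : u ∈ kGenSubgroup k K)
    (hw1 : IsOneModK k w) (hle : absLe k u w) :
    IsOneModK k u ∧ absLe k (u⁻¹ * w) w ∧ IsOneModK k (u⁻¹ * w) :=
  lower_ideal_general k K hk w u hw hu hw1 hle
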